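/- arXiv:math/0005270 — 4 statements merged into one kernel-verified Lean document; each statement's English description precedes it below -/
import Mathlib

section
/- For every partition S_1, ..., S_{m+1} of V_n into m+1 nonempty blocks, the partition m-hemimetric α(S_1,...,S_{m+1}) satisfies the simplex inequality, i.e., for all x_1,...,x_{m+2} ∈ V_n: α(x_1,...,x_{m+1}) ≤ Σ_{i=1}^{m+1} α(x_1,...,x_{i-1},x_{i+1},...,x_{m+2}). -/
/-- The partition `m`-hemimetric associated with a partition of `V_n = {1,…,n}`
into `m+1` nonempty blocks, the partition being given by a surjective map
`P : Fin n → Fin (m+1)` (the blocks are the fibers of `P`). -/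
def partitionHemimetric (n m : ℕ) (P : Fin n → Fin (m+1)) :
    (Fin (m+1) → Fin n) → ℝ :=
  fun x => if Function.Injective (P ∘ x) then 1 else 0

/-- The simplex inequality for partition hemimetrics: the `(m+2)`-tuple is `y`,
with `α(y_1,…,y_{m+1}) ≤ ∑_i α(y_1,…,y_{i-1},y_{i+1},…,y_{m+2})`. -/
theorem stmt2 (n m : ℕ) (P : Fin n → Fin (m+1)) (hP : Function.Surjective P) :
    ∀ y : Fin (m+2) → Fin n,
      partitionHemimetric n m P (fun j => y j.castSucc) ≤
        ∑ i : Fin (m+1),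
          partitionHemimetric n m P
            (fun j => if j = i then y (Fin.last (m+1)) else y j.castSucc) := by
  intro y
  have hnonneg : ∀ i : Fin (m+1), 0 ≤ partitionHemimetric n m P
      (fun j => if j = i then y (Fin.last (m+1)) else y j.castSucc) := by
    intro i
    unfold partitionHemimetric
    split <;> norm_num
  by_cases h : Function.Injective (P ∘ fun j : Fin (m+1) => y j.castSucc)
  · -- P ∘ y ∘ castSucc is a bijection on Fin (m+1)
    have hbij : Function.Bijective (P ∘ fun j : Fin (m+1) => y j.castSucc) :=
      (Fintype.bijective_iff_injective_and_card _).2 ⟨h, rfl⟩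
    obtain ⟨i, hi⟩ := hbij.surjective (P (y (Fin.last (m+1))))
    have heq : (P ∘ fun j : Fin (m+1) => if j = i then y (Fin.last (m+1)) else y j.castSucc)
        = (P ∘ fun j : Fin (m+1) => y j.castSucc) := by
      funext j
      by_cases hj : j = i
      · subst hj
        simp only [Function.comp, if_pos rfl]
        exact hi.symm
      · simp [Function.comp, hj]
    have hterm : partitionHemimetric n m P
        (fun j => if j = i then y (Fin.last (m+1)) else y j.castSucc) = 1 := by
      unfold partitionHemimetric
      rw [if_pos (heq ▸ h)]
    calc partitionHemimetric n m P (fun j => y j.castSucc) ≤ 1 := by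
            unfold partitionHemimetric; split <;> norm_num
      _ = partitionHemimetric n m P
            (fun j => if j = i then y (Fin.last (m+1)) else y j.castSucc) := hterm.symm
      _ ≤ _ := Finset.single_le_sum (fun i _ => hnonneg i) (Finset.mem_univ i)
  · have : partitionHemimetric n m P (fun j => y j.castSucc) = 0 := by
      unfold partitionHemimetric
      rw [if_neg h]
    rw [this]
    exact Finset.sum_nonneg fun i _ => hnonneg i
end

section
/- Every vector x ∈ ℝ^4, indexed by the four 3-element subsets of V_4, satisfying all four tetrahedron inequalities T_{ijk,l} ≥ 0 and all four nonnegativity inequalities x_{ijk} ≥ 0, is a nonnegative linear combination of the 6 partition 2-hemimetrics on V_4. In other words, P_4^2 = NHM_4^2. -/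
/-- Coordinates of `ℝ⁴` are indexed by `Fin 4`, coordinate `l` corresponding to
the 3-subset of `V₄` omitting the point `l+1`. The tetrahedron inequality with
negative term on the subset omitting `l` reads `x_l ≤ ∑_{i ≠ l} x_i`. Every
vector satisfying the 4 tetrahedron and 4 nonnegativity inequalities is a
nonnegative combination of the 6 partition 2-hemimetrics `e_a + e_b` (`a ≠ b`):
`P₄² = NHM₄²`. -/
theorem stmt11 (x : Fin 4 → ℝ)
    (hnn : ∀ i, 0 ≤ x i)
    (htetra : ∀ l : Fin 4, x l ≤ ∑ i ∈ Finset.univ.erase l, x i) :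
    ∃ c : Fin 4 × Fin 4 → ℝ, (∀ p, 0 ≤ c p) ∧
      x = fun i => ∑ p ∈ Finset.univ.filter (fun p : Fin 4 × Fin 4 => p.1 ≠ p.2),
        c p * ((if i = p.1 then 1 else 0) + (if i = p.2 then 1 else 0)) := by
  have ht : ∀ l : Fin 4, x l ≤ (x 0 + x 1 + x 2 + x 3) - x l := by
    intro l
    have h := htetra l
    rwa [Finset.sum_erase_eq_sub (Finset.mem_univ l), Fin.sum_univ_four] at h
  have h0 := ht 0; have h1 := ht 1; have h2 := ht 2; have h3 := ht 3
  have n0 := hnn 0; have n1 := hnn 1; have n2 := hnn 2; have n3 := hnn 3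
  set t : ℝ := (x 0 + x 1 + x 2 + x 3) / 2 with htdef
  set A : ℝ := (x 0 + x 1 - x 2 - x 3) / 2 with hAdef
  set B : ℝ := (x 0 + x 2 - x 1 - x 3) / 2 with hBdef
  set C : ℝ := (x 0 + x 3 - x 1 - x 2) / 2 with hCdef
  have hS : 0 ≤ t - |A| - |B| - |C| := by
    rcases abs_cases A with ⟨hA, _⟩ | ⟨hA, _⟩ <;>
    rcases abs_cases B with ⟨hB, _⟩ | ⟨hB, _⟩ <;>
    rcases abs_cases C with ⟨hC, _⟩ | ⟨hC, _⟩ <;>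
    rw [hA, hB, hC] <;> linarith
  set S : ℝ := t - |A| - |B| - |C| with hSdef
  have aA := neg_abs_le A; have aB := neg_abs_le B; have aC := neg_abs_le C
  have bA := le_abs_self A; have bB := le_abs_self B; have bC := le_abs_self C
  refine ⟨fun p => if p = (0,1) then (|A| + A)/2 + S/6
    else if p = (2,3) then (|A| - A)/2 + S/6
    else if p = (0,2) then (|B| + B)/2 + S/6
    else if p = (1,3) then (|B| - B)/2 + S/6
    else if p = (0,3) then (|C| + C)/2 + S/6
    else if p = (1,2) then (|C| - C)/2 + S/6
    else 0, ?_, ?_⟩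
  · intro p
    dsimp only
    split_ifs <;> linarith
  · funext i
    fin_cases i <;>
    · simp (config := { decide := true }) only [Finset.sum_filter, Fintype.sum_prod_type,
        Fin.sum_univ_four, Prod.mk.injEq, Fin.isValue, if_true, if_false, and_self, and_false,
        false_and, ite_true, ite_false, reduceIte]
      push_cast
      linarith
end

section
/- The cone HM_{m+2}^m of all m-hemimetrics on m+2 points is a simplicial cone of dimension m+2: the m+2 simplex inequalities, viewed as linear functionals on ℝ^{m+2}, are linearly independent. -/
/-- For `n = m+2`, coordinates of `ℝ^{m+2}` are indexed by points `l`,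
coordinate `l` corresponding to the `(m+1)`-subset `V ∖ {l}`. The `l`-th simplex
inequality is given by the linear functional with entry `-1` at `l` and `+1`
elsewhere. These `m+2` functionals are linearly independent, so `HM_{m+2}^m`
is a simplicial cone of full dimension `m+2`. -/
theorem stmt12 (m : ℕ) (hm : 1 ≤ m) :
    LinearIndependent ℝ
      (fun l : Fin (m+2) => (fun i => if i = l then (-1 : ℝ) else 1 : Fin (m+2) → ℝ)) := by
  rw [Fintype.linearIndependent_iff]
  intro g hg i
  -- evaluate the sum at each coordinate
  have h : ∀ j : Fin (m+2), (∑ l, g l - 2 * g j) = 0 := by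
    intro j
    have := congrFun hg j
    simp only [Finset.sum_apply, Pi.smul_apply, smul_eq_mul, Pi.zero_apply] at this
    have key : ∀ l : Fin (m+2), g l * (if j = l then (-1:ℝ) else 1)
        = g l - (if j = l then 2 * g l else 0) := by
      intro l
      by_cases h : j = l <;> simp [h] <;> ring
    rw [Finset.sum_congr rfl (fun l _ => key l), Finset.sum_sub_distrib,
      Finset.sum_ite_eq] at this
    simpa using this
  set S := ∑ l, g l with hS
  have h2 : ∀ j : Fin (m+2), g j = S / 2 := by
    intro j
    have := h j
    linarith
  have hsum : S = (m + 2 : ℝ) * (S / 2) := by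
    calc S = ∑ _j : Fin (m+2), (S/2) := by
            rw [hS]; exact Finset.sum_congr rfl (fun j _ => h2 j)
    _ = (m + 2 : ℝ) * (S / 2) := by
            rw [Finset.sum_const, Finset.card_univ, Fintype.card_fin, nsmul_eq_mul]
            push_cast; ring
  have hm' : (1 : ℝ) ≤ m := by exact_mod_cast hm
  have hS0 : S = 0 := by nlinarith
  have := h2 i
  rw [hS0] at this
  simpa using this
end

section
/- For m ≥ 2, the vectors e_a + e_b ∈ ℝ^{m+2} (for all 2-element subsets {a,b} of {1,...,m+2}) all satisfy the m+2 simplex inequalities T_l(x) = Σ_{i≠l} x_i - x_l ≥ 0 and the nonnegativity inequalities x_i ≥ 0; moreover, every x ∈ ℝ^{m+2} satisfying these inequalities is a nonnegative linear combination of vectors e_a + e_b. That is, P_{m+2}^m = NHM_{m+2}^m. -/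
open Finset

namespace Stmt15Aux

variable {n : ℕ}

/-- The `i`-th coordinate of `e_a + e_b`. -/
def E (a b i : Fin n) : ℝ := (if i = a then 1 else 0) + (if i = b then 1 else 0)

/-- Ordered pairs of distinct indices. -/
def pairs (n : ℕ) : Finset (Fin n × Fin n) :=
  Finset.univ.filter (fun p => p.1 ≠ p.2)

/-- The vector `∑ c_p (e_{p.1} + e_{p.2})` evaluated at `i`. -/
def val (c : Fin n × Fin n → ℝ) (i : Fin n) : ℝ :=
  ∑ p ∈ pairs n, c p * E p.1 p.2 i

/-- Being a nonnegative combination of the `e_a + e_b`. -/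
def Decomp (x : Fin n → ℝ) : Prop :=
  ∃ c : Fin n × Fin n → ℝ, (∀ p, 0 ≤ c p) ∧ ∀ i, x i = val c i

lemma E_nonneg (a b i : Fin n) : 0 ≤ E a b i := by
  unfold E; positivity

lemma E_le_one {a b : Fin n} (hab : a ≠ b) (i : Fin n) : E a b i ≤ 1 := by
  unfold E
  split_ifs with h1 h2 h2
  · exact absurd (h1.symm.trans h2) hab
  all_goals norm_num

lemma sum_E {a b : Fin n} (hab : a ≠ b) : ∑ i, E a b i = 2 := by
  unfold E
  rw [Finset.sum_add_distrib]
  simp [Finset.sum_ite_eq']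
  norm_num

lemma decomp_zero : Decomp (fun _ : Fin n => (0:ℝ)) :=
  ⟨fun _ => 0, fun _ => le_refl 0, fun i => by simp [val]⟩

lemma decomp_tight {x : Fin n → ℝ} (hx : ∀ i, 0 ≤ x i) (a : Fin n)
    (ha : 2 * x a = ∑ i, x i) : Decomp x := by
  refine ⟨fun p => if p.1 = a then x p.2 else 0, ?_, ?_⟩
  · intro p; by_cases h : p.1 = a <;> simp [h, hx]
  · intro i
    unfold val pairs
    rw [Finset.sum_filter, Fintype.sum_prod_type]
    rw [Finset.sum_eq_single a]
    · simp only [eq_self_iff_true, if_true]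
      by_cases hia : i = a
      · subst hia
        have key : ∀ b : Fin n, (if i ≠ b then x b * E i b i else 0)
            = x b - (if b = i then x b else 0) := by
          intro b
          by_cases hb : i = b
          · simp [hb]
          · have hbi : b ≠ i := fun h => hb h.symm
            simp [hb, E, hbi]
        rw [Finset.sum_congr rfl (fun b _ => key b), Finset.sum_sub_distrib,
          Finset.sum_ite_eq' Finset.univ i (fun b => x b)]
        simp only [Finset.mem_univ, if_pos]
        linarith
      · have key : ∀ b : Fin n, (if a ≠ b then x b * E a b i else 0)
            = (if b = i then x i else 0) := by
          intro b
          by_cases hb : b = i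
          · subst hb
            have hab : a ≠ b := fun h => hia h.symm
            simp [hab, E, hia]
          · by_cases hab : a ≠ b
            · have hib : i ≠ b := fun h => hb h.symm
              simp [hab, E, hia, hib, hb]
            · simp [hab, hb]
        rw [Finset.sum_congr rfl (fun b _ => key b),
          Finset.sum_ite_eq' Finset.univ i (fun _ => x i)]
        simp
    · intro b _ hb
      apply Finset.sum_eq_zero
      intro j _
      simp [hb]
    · intro h; exact absurd (Finset.mem_univ a) h


lemma decomp_add_edge {x' : Fin n → ℝ} (h : Decomp x') {a b : Fin n} (hab : a ≠ b)
    {t : ℝ} (ht : 0 ≤ t) : Decomp (fun i => x' i + t * E a b i) := by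
  obtain ⟨c, hc, hval⟩ := h
  refine ⟨fun p => c p + if p = (a, b) then t else 0, ?_, ?_⟩
  · intro p
    by_cases hp : p = (a, b) <;> simp [hp, ht]
    · linarith [hc (a,b)]
    · exact hc p
  · intro i
    unfold val
    simp only [add_mul, Finset.sum_add_distrib, ite_mul, zero_mul]
    rw [Finset.sum_ite_eq' (pairs n) (a, b) (fun p => t * E p.1 p.2 i)]
    have hmem : (a, b) ∈ pairs n := by simp [pairs, hab]
    rw [if_pos hmem, hval i]
    rfl

lemma main (hn : 3 ≤ n) : ∀ (k : ℕ) (x : Fin n → ℝ), (∀ i, 0 ≤ x i) →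
    (∀ l, 2 * x l ≤ ∑ i, x i) →
    ((Finset.univ.filter fun i => x i ≠ 0).card ≤ k) → Decomp x := by
  intro k
  induction k with
  | zero =>
    intro x hx _ hcard
    have hzero : ∀ i, x i = 0 := by
      intro i
      by_contra h
      have hmem : i ∈ Finset.univ.filter (fun i => x i ≠ 0) := by simp [h]
      have := Finset.card_pos.mpr ⟨i, hmem⟩
      omega
    rw [funext hzero]
    exact decomp_zero
  | succ k ih =>
    intro x hx hs hcard
    by_cases htight : ∃ a, 2 * x a = ∑ i, x i
    · obtain ⟨a, ha⟩ := htight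
      exact decomp_tight hx a ha
    push_neg at htight
    have hstrict : ∀ l, 2 * x l < ∑ i, x i := fun l => lt_of_le_of_ne (hs l) (htight l)
    by_cases hx0 : ∀ i, x i = 0
    · rw [funext hx0]; exact decomp_zero
    push_neg at hx0
    obtain ⟨a, ha0⟩ := hx0
    have hxa : 0 < x a := lt_of_le_of_ne (hx a) (Ne.symm ha0)
    have hrest : ∑ i ∈ Finset.univ.erase a, x i = (∑ i, x i) - x a := by
      rw [← Finset.add_sum_erase Finset.univ x (Finset.mem_univ a)]; ring
    have hsum_rest : x a < ∑ i ∈ Finset.univ.erase a, x i := by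
      have := hstrict a; linarith
    have hbex : ∃ b ∈ Finset.univ.erase a, 0 < x b := by
      by_contra h
      push_neg at h
      have : ∑ i ∈ Finset.univ.erase a, x i ≤ 0 :=
        Finset.sum_nonpos (fun i hi => h i hi)
      linarith
    obtain ⟨b, hbmem, hxb⟩ := hbex
    have hba : b ≠ a := (Finset.mem_erase.mp hbmem).1
    have hab : a ≠ b := Ne.symm hba
    set s : Finset (Fin n) := (Finset.univ.erase a).erase b with hs_def
    have hsne : s.Nonempty := by
      rw [← Finset.card_pos, hs_def, Finset.card_erase_of_mem hbmem,
        Finset.card_erase_of_mem (Finset.mem_univ a), Finset.card_univ, Fintype.card_fin]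
      omega
    set S : ℝ := ∑ i, x i with hS_def
    set u : ℝ := s.inf' hsne (fun l => S - 2 * x l) with hu_def
    have hu0 : 0 ≤ u := Finset.le_inf' hsne _ (fun l _ => by have := hs l; linarith)
    have hul : ∀ l ∈ s, u ≤ S - 2 * x l := fun l hl => Finset.inf'_le _ hl
    set t : ℝ := min (x a) (min (x b) (u / 2)) with ht_def
    have ht0 : 0 ≤ t := le_min hxa.le (le_min hxb.le (by linarith))
    have hta : t ≤ x a := min_le_left _ _
    have htb : t ≤ x b := le_trans (min_le_right _ _) (min_le_left _ _)
    have htu : 2 * t ≤ u := by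
      have := le_trans (min_le_right (x a) _) (min_le_right (x b) (u / 2))
      rw [← ht_def] at this
      linarith
    set x' : Fin n → ℝ := fun i => x i - t * E a b i with hx'_def
    have hEa : E a b a = 1 := by simp [E, hab]
    have hEb : E a b b = 1 := by simp [E, hba]
    have hEo : ∀ i, i ≠ a → i ≠ b → E a b i = 0 := fun i h1 h2 => by simp [E, h1, h2]
    have hx'a : x' a = x a - t := by rw [hx'_def]; simp [hEa]
    have hx'b : x' b = x b - t := by rw [hx'_def]; simp [hEb]
    have hx'o : ∀ i, i ≠ a → i ≠ b → x' i = x i := fun i h1 h2 => by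
      rw [hx'_def]; simp [hEo i h1 h2]
    have hx' : ∀ i, 0 ≤ x' i := by
      intro i
      by_cases h1 : i = a
      · subst h1; rw [hx'a]; linarith
      by_cases h2 : i = b
      · subst h2; rw [hx'b]; linarith
      rw [hx'o i h1 h2]; exact hx i
    have hS' : ∑ i, x' i = S - 2 * t := by
      rw [hx'_def]
      rw [Finset.sum_sub_distrib, ← Finset.mul_sum, sum_E hab, hS_def]
      ring
    have hmem_s : ∀ l, l ≠ a → l ≠ b → l ∈ s := by
      intro l h1 h2
      rw [hs_def, Finset.mem_erase, Finset.mem_erase]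
      exact ⟨h2, h1, Finset.mem_univ l⟩
    have hs' : ∀ l, 2 * x' l ≤ ∑ i, x' i := by
      intro l
      rw [hS']
      by_cases h1 : l = a
      · subst h1; rw [hx'a]; have := hs l; linarith
      by_cases h2 : l = b
      · subst h2; rw [hx'b]; have := hs l; linarith
      rw [hx'o l h1 h2]
      have := hul l (hmem_s l h1 h2)
      linarith
    have hxeq : x = fun i => x' i + t * E a b i := by
      funext i; rw [hx'_def]; ring
    have hsupp_le : ∀ (j : Fin n), x' j = 0 →
        (Finset.univ.filter fun i => x' i ≠ 0).card ≤
          ((Finset.univ.filter fun i => x i ≠ 0).erase j).card := by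
      intro j hj
      apply Finset.card_le_card
      intro i hi
      simp only [Finset.mem_filter, Finset.mem_univ, true_and] at hi
      rw [Finset.mem_erase, Finset.mem_filter]
      refine ⟨fun h => hi (h ▸ hj), Finset.mem_univ i, fun h0 => ?_⟩
      apply hi
      have h1 : x' i ≤ x i := by
        rw [hx'_def]
        have : 0 ≤ t * E a b i := mul_nonneg ht0 (by unfold E; positivity)
        simp; linarith
      have := hx' i
      linarith [h0 ▸ h1]
    have hcase : t = x a ∨ t = x b ∨ t = u / 2 := by
      rcases min_cases (x a) (min (x b) (u / 2)) with ⟨h1, _⟩ | ⟨h1, _⟩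
      · exact Or.inl h1
      · rcases min_cases (x b) (u / 2) with ⟨h2, _⟩ | ⟨h2, _⟩
        · exact Or.inr (Or.inl (h1.trans h2))
        · exact Or.inr (Or.inr (h1.trans h2))
    have hshrink : ∀ (j : Fin n), x j ≠ 0 → x' j = 0 → Decomp x := by
      intro j hj hj'
      have hjmem : j ∈ Finset.univ.filter (fun i => x i ≠ 0) := by simp [hj]
      have hcard' : (Finset.univ.filter fun i => x' i ≠ 0).card ≤ k := by
        have h1 := hsupp_le j hj'
        have h2 := Finset.card_erase_of_mem hjmem
        have h3 := Finset.card_pos.mpr ⟨j, hjmem⟩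
        omega
      have hd := ih x' hx' hs' hcard'
      rw [hxeq]
      exact decomp_add_edge hd hab ht0
    rcases hcase with hteq | hteq | hteq
    · exact hshrink a (ne_of_gt hxa) (by rw [hx'a, hteq]; ring)
    · exact hshrink b (ne_of_gt hxb) (by rw [hx'b, hteq]; ring)
    · obtain ⟨l0, hl0mem, hl0⟩ := Finset.exists_mem_eq_inf' hsne (fun l => S - 2 * x l)
      have hl0b : l0 ≠ b := (Finset.mem_erase.mp hl0mem).1
      have hl0a : l0 ≠ a := (Finset.mem_erase.mp (Finset.mem_erase.mp hl0mem).2).1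
      have htight' : 2 * x' l0 = ∑ i, x' i := by
        rw [hx'o l0 hl0a hl0b, hS']
        rw [← hu_def] at hl0
        rw [hteq] at *
        linarith [hl0]
      have hd := decomp_tight hx' l0 htight'
      rw [hxeq]
      exact decomp_add_edge hd hab ht0

lemma val_nonneg {c : Fin n × Fin n → ℝ} (hc : ∀ p, 0 ≤ c p) (i : Fin n) :
    0 ≤ val c i :=
  Finset.sum_nonneg fun p _ => mul_nonneg (hc p) (E_nonneg _ _ _)

lemma val_simplex {c : Fin n × Fin n → ℝ} (hc : ∀ p, 0 ≤ c p) (l : Fin n) :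
    2 * val c l ≤ ∑ i, val c i := by
  have hsum : ∑ i, val c i = ∑ p ∈ pairs n, c p * 2 := by
    unfold val
    rw [Finset.sum_comm]
    apply Finset.sum_congr rfl
    intro p hp
    have hab : p.1 ≠ p.2 := by simpa [pairs] using hp
    rw [← Finset.mul_sum, sum_E hab]
  rw [hsum]
  unfold val
  rw [Finset.mul_sum]
  apply Finset.sum_le_sum
  intro p hp
  have hab : p.1 ≠ p.2 := by simpa [pairs] using hp
  have h1 := E_le_one hab l
  have h2 := E_nonneg p.1 p.2 l
  have h3 := hc p
  nlinarith

end Stmt15Aux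

/-- `P_{m+2}^m = NHM_{m+2}^m` for `m ≥ 2`: a vector `x ∈ ℝ^{m+2}` satisfies all
nonnegativity inequalities and all simplex inequalities `x_l ≤ ∑_{i≠l} x_i`
if and only if it is a nonnegative linear combination of the vectors
`e_a + e_b` (`a ≠ b`), i.e. of the partition `m`-hemimetrics on `m+2` points. -/
theorem stmt15 (m : ℕ) (hm : 2 ≤ m) (x : Fin (m+2) → ℝ) :
    ((∀ i, 0 ≤ x i) ∧ (∀ l, x l ≤ ∑ i ∈ Finset.univ.erase l, x i)) ↔
      ∃ c : Fin (m+2) × Fin (m+2) → ℝ, (∀ p, 0 ≤ c p) ∧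
        x = fun i => ∑ p ∈ Finset.univ.filter
              (fun p : Fin (m+2) × Fin (m+2) => p.1 ≠ p.2),
            c p * ((if i = p.1 then 1 else 0) + (if i = p.2 then 1 else 0)) := by
  have herase : ∀ (y : Fin (m+2) → ℝ) (l : Fin (m+2)),
      ∑ i ∈ Finset.univ.erase l, y i = (∑ i, y i) - y l := by
    intro y l
    rw [← Finset.add_sum_erase Finset.univ y (Finset.mem_univ l)]
    ring
  constructor
  · rintro ⟨h1, h2⟩
    have hs : ∀ l, 2 * x l ≤ ∑ i, x i := by
      intro l
      have := h2 l
      rw [herase x l] at this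
      linarith
    obtain ⟨c, hc, hval⟩ := Stmt15Aux.main (n := m+2) (by omega) _ x h1 hs le_rfl
    exact ⟨c, hc, funext hval⟩
  · rintro ⟨c, hc, rfl⟩
    constructor
    · intro i
      exact Stmt15Aux.val_nonneg hc i
    · intro l
      have hv := Stmt15Aux.val_simplex hc l
      show Stmt15Aux.val c l ≤ ∑ i ∈ Finset.univ.erase l, Stmt15Aux.val c i
      rw [herase (Stmt15Aux.val c) l]
      linarith
end
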